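/- arXiv:2306.11214 — 7 statements merged into one kernel-verified Lean document; each statement's English description precedes it below -/
import Mathlib

section
/- Fix an integer n ≥ 1, a real number P ∈ (0,1), and a real number c > 0. Let γ : ℕ → ℝ be a sequence with γ_m > 0 for all m and γ_m/m → c as m → ∞. Then lim_{m→∞} [ 1 − S(m, γ_m, P) − (−1)^n · T(m, γ_m, P) ] = 1 − (1−P) / (1 − (c/n)·ln(1−P))^n. (Note that ln(1−P) < 0, so the denominator is strictly positive.) -/
/-!
Write `q = 1 - P`, `b = 1 - (c/n) log q` and `a = b / c`.

The summands of `T` are `q^((m-1)/m) γ^(-n) C(n-1+k, k) x^k` with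
`x = rocRatio = (1 + 1/γ) q^(-1/(mn))`, and the partial sum of this negative binomial series
is a binomial tail:
`(1 - x)^n ∑_{k<m-n} C(n-1+k, k) x^k = 1 - ∑_{j<n} C(m-1, j) (1-x)^j x^(m-1-j)`.
Since `m (x - 1) → a` and `γ (1 - x) → -b`, the Poisson limit theorem gives
`(-1)^n T → q (1 - e^a ∑_{j<n} (-a)^j / j!) / b^n`.

In `S`, the coefficient `(m+k-1)! / ((m-1)! γ^(n-ℓ-1))` behaves like `c^(-k) γ^(-(n-1-k-ℓ))`,
so only the terms with `ℓ = n-1-k` survive; as `1 + γ (1 - q^(1/(mn))) → b`, they add up to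
`S → q e^a ∑_{j<n} (-a)^j / j! / b^n`. The exponential sums cancel in `1 - S - (-1)^n T`.
-/

open Filter

/-- The function `S(m,γ,P)` of Appendix D of the paper. -/
noncomputable def rocS (n m : ℕ) (γ P : ℝ) : ℝ :=
  (n.factorial : ℝ) * (1 + 1 / γ) ^ (m - n) *
    ∑ k ∈ Finset.range n, ∑ ℓ ∈ Finset.range (n - k),
      ((-1 : ℝ) ^ k * (m + k - 1).factorial /
          ((m - 1).factorial * k.factorial * (n - 1 - k - ℓ).factorial *
            (k + ℓ + 1).factorial * γ ^ (n - ℓ - 1))) *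
        (1 - P) ^ (((m : ℝ) * ((n : ℝ) - 1) + ℓ + 1) / ((m : ℝ) * n)) /
        (1 + γ * (1 - (1 - P) ^ (1 / ((m : ℝ) * (n : ℝ))))) ^ (ℓ + 1)

/-- The function `T(m,γ,P)` of Appendix D of the paper. -/
noncomputable def rocT (n m : ℕ) (γ P : ℝ) : ℝ :=
  ∑ k ∈ Finset.range (m - n),
    ((n + k - 1).factorial : ℝ) / (k.factorial * (n - 1).factorial * γ ^ n) *
      (1 + 1 / γ) ^ k * (1 - P) ^ (((n : ℝ) * ((m : ℝ) - 1) - k) / ((m : ℝ) * n))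

open Finset Real Topology

theorem sum_choose_mul_pow_sub_sum_choose_succ_mul_pow {R : Type*} [CommRing R] (x : R)
    (p M : ℕ) :
    ∑ j ∈ range (p + 1), ((p + M).choose j : R) * (1 - x) ^ j * x ^ (p + M - j)
      - ∑ j ∈ range (p + 1), ((p + M + 1).choose j : R) * (1 - x) ^ j * x ^ (p + M + 1 - j)
      = ((p + M).choose p : R) * (1 - x) ^ (p + 1) * x ^ M := by
  induction p generalizing M with
  | zero =>
    simp only [zero_add, sum_range_one, Nat.choose_zero_right, Nat.cast_one, pow_zero, Nat.sub_zero]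
    ring
  | succ p ih =>
    rw [sum_range_succ, sum_range_succ _ (p + 1), show p + 1 + M = p + (M + 1) by omega,
      Nat.choose_succ_succ', Nat.cast_add, show p + (M + 1) - (p + 1) = M by omega,
      show p + (M + 1) + 1 - (p + 1) = M + 1 by omega]
    linear_combination ih (M + 1)

theorem one_sub_pow_mul_sum_choose_mul_pow {R : Type*} [CommRing R] (x : R) (p M : ℕ) :
    (1 - x) ^ (p + 1) * ∑ k ∈ range M, ((p + k).choose k : R) * x ^ k
      = 1 - ∑ j ∈ range (p + 1), ((p + M).choose j : R) * (1 - x) ^ j * x ^ (p + M - j) := by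
  induction M with
  | zero =>
    rw [range_zero, sum_empty, mul_zero, add_zero, eq_comm, sub_eq_zero]
    calc (1 : R) = ((1 - x) + x) ^ p := by rw [sub_add_cancel, one_pow]
      _ = _ := by rw [add_pow]; exact sum_congr rfl fun _ _ => by ring
  | succ M ih =>
    rw [sum_range_succ, mul_add, ih, ← Nat.choose_symm_add, ← add_assoc]
    linear_combination -sum_choose_mul_pow_sub_sum_choose_succ_mul_pow x p M

theorem sum_range_sum_range_zero_pow_mul {R : Type*} [Semiring R] (n : ℕ)
    (f : ℕ → ℕ → R) :
    ∑ k ∈ range n, ∑ ℓ ∈ range (n - k), (0 : R) ^ (n - 1 - k - ℓ) * f k ℓ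
      = ∑ k ∈ range n, f k (n - 1 - k) := by
  refine sum_congr rfl fun k hk => ?_
  rw [mem_range] at hk
  rw [sum_eq_single_of_mem (n - 1 - k) (mem_range.2 (by omega)) fun ℓ hℓ hne => ?_]
  · simp
  · rw [mem_range] at hℓ
    simp [zero_pow (show n - 1 - k - ℓ ≠ 0 by omega)]

theorem tendsto_nat_mul_rpow_div_sub_one {q : ℝ} (hq : 0 < q) (t : ℝ) :
    Tendsto (fun m : ℕ => (m : ℝ) * (q ^ (t / m) - 1)) atTop (𝓝 (t * log q)) := by
  have hderiv : HasDerivAt (fun s => q ^ (t * s)) (t * log q) 0 := by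
    simpa [mul_comm] using ((hasDerivAt_id (0 : ℝ)).const_mul t).const_rpow hq
  refine (hderiv.tendsto_slope_zero_right.comp
    (tendsto_inv_atTop_nhdsGT_zero.comp tendsto_natCast_atTop_atTop)).congr fun m => ?_
  simp [div_eq_mul_inv]

theorem tendsto_rpow_add_div_natCast {q : ℝ} (hq : 0 < q) (a b : ℝ) :
    Tendsto (fun m : ℕ => q ^ (a + b / m)) atTop (𝓝 (q ^ a)) :=
  tendsto_const_nhds.rpow (by simpa using (tendsto_const_div_atTop_nhds_zero_nat b).const_add a)
    (Or.inl hq.ne')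

theorem tendsto_add_mul_of_tendsto_mul {u : ℕ → ℝ} {r : ℝ}
    (h : Tendsto (fun m => m * u m) atTop (𝓝 r)) (d : ℝ) :
    Tendsto (fun m => (m + d) * u m) atTop (𝓝 r) := by
  simpa [add_mul] using h.add ((ProbabilityTheory.tendsto_zero_of_tendsto_mul_atTop h).const_mul d)

theorem tendsto_ascFactorial_mul_pow {u : ℕ → ℝ} {r : ℝ}
    (h : Tendsto (fun m => m * u m) atTop (𝓝 r)) (k : ℕ) :
    Tendsto (fun m => (m.ascFactorial k : ℝ) * u m ^ k) atTop (𝓝 (r ^ k)) := by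
  rw [show r ^ k = ∏ _i ∈ range k, r by simp]
  refine (tendsto_finsetProd (range k) fun (i : ℕ) _ => tendsto_add_mul_of_tendsto_mul h i).congr
    fun m => ?_
  simp [Nat.ascFactorial_eq_prod_range, prod_mul_distrib]

theorem tendsto_one_add_pow_sub_exp_of_tendsto {g : ℕ → ℝ} {t : ℝ}
    (hg : Tendsto (fun m => m * g m) atTop (𝓝 t)) (K : ℕ) :
    Tendsto (fun m => (1 + g m) ^ (m - K)) atTop (𝓝 (exp t)) := by
  have hg0 := ProbabilityTheory.tendsto_zero_of_tendsto_mul_atTop hg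
  have hbase : Tendsto (fun m => 1 + g m) atTop (𝓝 1) := by simpa using hg0.const_add 1
  have hne : ∀ᶠ m in atTop, 1 + g m ≠ 0 := hbase.eventually_ne one_ne_zero
  have := (Real.tendsto_one_add_pow_exp_of_tendsto hg).div (hbase.pow K) (by simp)
  rw [one_pow, div_one] at this
  refine this.congr' ?_
  filter_upwards [hne, eventually_ge_atTop K] with m hm hmK
  simp only [Pi.div_apply]
  rw [pow_sub₀ _ hm hmK, div_eq_mul_inv]

noncomputable def rocRatio (n m : ℕ) (γ P : ℝ) : ℝ :=
  (1 + 1 / γ) * (1 - P) ^ (-1 / ((m : ℝ) * n))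

theorem rocT_eq_mul_sum {n m : ℕ} {γ P : ℝ} (hn : n ≠ 0) (hm : m ≠ 0) (hγ : γ ≠ 0)
    (hq : 0 < 1 - P) :
    rocT n m γ P = (1 - P) ^ (((m : ℝ) - 1) / m) / γ ^ n *
      ∑ k ∈ range (m - n), ((n - 1 + k).choose k : ℝ) * rocRatio n m γ P ^ k := by
  rw [rocT, mul_sum]
  refine sum_congr rfl fun k _ => ?_
  have hfac : ((n + k - 1).factorial : ℝ) / (k.factorial * (n - 1).factorial)
      = ((n - 1 + k).choose k : ℝ) := by
    rw [← Nat.choose_symm_add, Nat.cast_add_choose, show n - 1 + k = n + k - 1 by omega, mul_comm]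
  have hpow : (1 - P) ^ (((n : ℝ) * ((m : ℝ) - 1) - k) / ((m : ℝ) * n))
      = (1 - P) ^ (((m : ℝ) - 1) / m) * ((1 - P) ^ (-1 / ((m : ℝ) * n))) ^ k := by
    rw [← rpow_natCast, ← rpow_mul hq.le, ← rpow_add hq]
    congr 1
    field_simp
    ring
  rw [hpow, rocRatio, mul_pow, ← hfac]
  field_simp

theorem rocT_mul_pow_eq {n m : ℕ} {γ P : ℝ} (hn : n ≠ 0) (hnm : n ≤ m) (hγ : γ ≠ 0)
    (hq : 0 < 1 - P) :
    (γ * (1 - rocRatio n m γ P)) ^ n * rocT n m γ P = (1 - P) ^ (((m : ℝ) - 1) / m) *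
      (1 - ∑ j ∈ range n, ((m - 1).choose j : ℝ) * (1 - rocRatio n m γ P) ^ j *
        rocRatio n m γ P ^ (m - 1 - j)) := by
  obtain ⟨p, rfl⟩ : ∃ p, n = p + 1 := ⟨n - 1, by omega⟩
  obtain ⟨M, rfl⟩ : ∃ M, m = p + 1 + M := ⟨m - (p + 1), by omega⟩
  rw [rocT_eq_mul_sum hn (by omega) hγ hq]
  simp only [Nat.add_sub_cancel, Nat.add_sub_cancel_left, show p + 1 + M - 1 = p + M by omega]
  rw [← one_sub_pow_mul_sum_choose_mul_pow, mul_pow]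
  field_simp

theorem rocS_eq {n m : ℕ} {γ P : ℝ} (hm : m ≠ 0) (hγ : γ ≠ 0) :
    rocS n m γ P = (n.factorial : ℝ) * (1 + 1 / γ) ^ (m - n) *
      ∑ k ∈ range n, ∑ ℓ ∈ range (n - k),
        (1 / γ) ^ (n - 1 - k - ℓ) * ((-1) ^ k * ((m.ascFactorial k : ℝ) * (1 / γ) ^ k) /
            (k.factorial * (n - 1 - k - ℓ).factorial * (k + ℓ + 1).factorial) *
          (1 - P) ^ (((m : ℝ) * ((n : ℝ) - 1) + ℓ + 1) / ((m : ℝ) * n)) /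
          (1 + γ * (1 - (1 - P) ^ (1 / ((m : ℝ) * (n : ℝ))))) ^ (ℓ + 1)) := by
  rw [rocS]
  congr 1
  refine sum_congr rfl fun k hk => sum_congr rfl fun ℓ hℓ => ?_
  rw [mem_range] at hk hℓ
  rw [← Nat.factorial_mul_ascFactorial' m k (Nat.pos_of_ne_zero hm),
    show n - ℓ - 1 = k + (n - 1 - k - ℓ) by omega, pow_add]
  simp only [div_pow, one_pow]
  push_cast
  field_simp

section Limits

variable {n : ℕ} {P c : ℝ} {γ : ℕ → ℝ}

theorem tendsto_natCast_mul_one_div (hc : c ≠ 0)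
    (hγ : Tendsto (fun m : ℕ => γ m / m) atTop (𝓝 c)) :
    Tendsto (fun m : ℕ => (m : ℝ) * (1 / γ m)) atTop (𝓝 (1 / c)) := by
  simpa [div_eq_mul_inv, mul_comm] using hγ.inv₀ hc

theorem tendsto_natCast_mul_rocRatio_sub_one (hq : 0 < 1 - P) (hc : c ≠ 0)
    (hγ : Tendsto (fun m : ℕ => γ m / m) atTop (𝓝 c)) :
    Tendsto (fun m : ℕ => (m : ℝ) * (rocRatio n m (γ m) P - 1)) atTop
      (𝓝 ((1 - c / n * log (1 - P)) / c)) := by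
  have he := tendsto_nat_mul_rpow_div_sub_one hq (-1 / n)
  have he1 : Tendsto (fun m : ℕ => (1 - P) ^ (-1 / n / m : ℝ)) atTop (𝓝 1) := by
    simpa using (ProbabilityTheory.tendsto_zero_of_tendsto_mul_atTop he).const_add 1
  convert ((tendsto_natCast_mul_one_div hc hγ).mul he1).add he using 2
  · rw [rocRatio, div_div, mul_comm (n : ℝ)]
    ring
  · field_simp
    ring

theorem tendsto_mul_one_sub_rocRatio (hq : 0 < 1 - P) (hc : c ≠ 0)
    (hγ : Tendsto (fun m : ℕ => γ m / m) atTop (𝓝 c)) :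
    Tendsto (fun m : ℕ => γ m * (1 - rocRatio n m (γ m) P)) atTop
      (𝓝 (-(1 - c / n * log (1 - P)))) := by
  have := (hγ.mul (tendsto_natCast_mul_rocRatio_sub_one (n := n) hq hc hγ)).neg
  rw [mul_div_cancel₀ _ hc] at this
  refine this.congr' ?_
  filter_upwards [eventually_ne_atTop 0] with m hm
  field_simp
  ring

theorem tendsto_rocS_denominator (hq : 0 < 1 - P)
    (hγ : Tendsto (fun m : ℕ => γ m / m) atTop (𝓝 c)) :
    Tendsto (fun m : ℕ => 1 + γ m * (1 - (1 - P) ^ (1 / ((m : ℝ) * n)))) atTop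
      (𝓝 (1 - c / n * log (1 - P))) := by
  have := tendsto_const_nhds (x := (1 : ℝ)).sub
    (hγ.mul (tendsto_nat_mul_rpow_div_sub_one hq (1 / n)))
  rw [show 1 - c * (1 / n * log (1 - P)) = 1 - c / n * log (1 - P) by ring] at this
  refine this.congr' ?_
  filter_upwards [eventually_ne_atTop 0] with m hm
  rw [div_div, mul_comm (n : ℝ)]
  field_simp
  ring

theorem tendsto_rocT (hn : n ≠ 0) (hq : 0 < 1 - P) (hc : c ≠ 0)
    (hb : 1 - c / n * log (1 - P) ≠ 0) (hγ : Tendsto (fun m : ℕ => γ m / m) atTop (𝓝 c)) :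
    Tendsto (fun m : ℕ => rocT n m (γ m) P) atTop
      (𝓝 ((1 - P) * (1 - ∑ j ∈ range n, exp ((1 - c / n * log (1 - P)) / c) *
          (-((1 - c / n * log (1 - P)) / c)) ^ j / j.factorial) /
        (-(1 - c / n * log (1 - P))) ^ n)) := by
  have hx := tendsto_natCast_mul_rocRatio_sub_one (n := n) hq hc hγ
  have hp : Tendsto (fun N : ℕ => (N : ℝ) * (1 - rocRatio n (N + 1) (γ (N + 1)) P)) atTop
      (𝓝 (-((1 - c / n * log (1 - P)) / c))) := by
    have h1 := (tendsto_add_atTop_iff_nat 1).mpr hx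
    have h0 := (tendsto_add_atTop_iff_nat 1).mpr
      (ProbabilityTheory.tendsto_zero_of_tendsto_mul_atTop hx)
    convert (h1.sub h0).neg using 2
    · push_cast
      ring
    · simp
  have hbin : Tendsto (fun m : ℕ => ∑ j ∈ range n, ((m - 1).choose j : ℝ) *
      (1 - rocRatio n m (γ m) P) ^ j * rocRatio n m (γ m) P ^ (m - 1 - j)) atTop
      (𝓝 (∑ j ∈ range n, exp ((1 - c / n * log (1 - P)) / c) *
          (-((1 - c / n * log (1 - P)) / c)) ^ j / j.factorial)) := by
    rw [← tendsto_add_atTop_iff_nat 1]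
    refine tendsto_finsetSum _ fun j _ => ?_
    simpa using ProbabilityTheory.tendsto_choose_mul_pow_of_tendsto_mul_atTop j hp
  have hQ : Tendsto (fun m : ℕ => (1 - P) ^ (((m : ℝ) - 1) / m)) atTop (𝓝 (1 - P)) := by
    refine (rpow_one (1 - P) ▸ tendsto_rpow_add_div_natCast hq 1 (-1)).congr' ?_
    filter_upwards [eventually_ne_atTop 0] with m hm
    rw [sub_div, div_self (Nat.cast_ne_zero.2 hm), neg_div, ← sub_eq_add_neg]
  have hden := tendsto_mul_one_sub_rocRatio (n := n) hq hc hγ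
  refine ((hQ.mul (tendsto_const_nhds.sub hbin)).div (hden.pow n)
    (pow_ne_zero n (neg_ne_zero.2 hb))).congr' ?_
  filter_upwards [eventually_ge_atTop n, hden.eventually_ne (neg_ne_zero.2 hb)] with m hnm hne
  rw [Pi.div_apply, div_eq_iff (pow_ne_zero n hne), mul_comm (rocT n m (γ m) P),
    rocT_mul_pow_eq hn hnm (left_ne_zero_of_mul hne) hq]

theorem tendsto_rocS_sum (hn : n ≠ 0) (hq : 0 < 1 - P) (hc : c ≠ 0)
    (hb : 1 - c / n * log (1 - P) ≠ 0) (hγ : Tendsto (fun m : ℕ => γ m / m) atTop (𝓝 c)) :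
    Tendsto (fun m : ℕ => rocS n m (γ m) P) atTop
      (𝓝 (n.factorial * exp (1 / c) * ∑ k ∈ range n, (-1) ^ k * (1 / c) ^ k /
        (k.factorial * n.factorial) * (1 - P) ^ (((n : ℝ) - 1) / n) /
          (1 - c / n * log (1 - P)) ^ (n - k))) := by
  have hinv := tendsto_natCast_mul_one_div hc hγ
  have hpow : ∀ ℓ : ℕ, Tendsto
      (fun m : ℕ => (1 - P) ^ (((m : ℝ) * ((n : ℝ) - 1) + ℓ + 1) / ((m : ℝ) * n))) atTop
      (𝓝 ((1 - P) ^ (((n : ℝ) - 1) / n))) := fun ℓ =>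
    (tendsto_rpow_add_div_natCast hq _ ((ℓ + 1) / n)).congr' <| by
      filter_upwards [eventually_ne_atTop 0] with m hm
      congr 1
      field_simp
      ring
  have hden := tendsto_rocS_denominator (n := n) hq hγ
  have hraw := (tendsto_const_nhds (x := (n.factorial : ℝ))).mul
    (tendsto_one_add_pow_sub_exp_of_tendsto hinv n) |>.mul <|
    tendsto_finsetSum (range n) fun k _ => tendsto_finsetSum (range (n - k)) fun ℓ _ =>
      ((ProbabilityTheory.tendsto_zero_of_tendsto_mul_atTop hinv).pow (n - 1 - k - ℓ)).mul <|
        ((((tendsto_const_nhds (x := (-1 : ℝ) ^ k)).mul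
          (tendsto_ascFactorial_mul_pow hinv k)).div_const
            ((k.factorial : ℝ) * (n - 1 - k - ℓ).factorial * (k + ℓ + 1).factorial)).mul
              (hpow ℓ)).div (hden.pow (ℓ + 1)) (pow_ne_zero _ hb)
  have hγ0 : ∀ᶠ m : ℕ in atTop, γ m ≠ 0 := by
    filter_upwards [hγ.eventually_ne hc] with m hm h0
    simp [h0] at hm
  rw [sum_range_sum_range_zero_pow_mul] at hraw
  convert hraw.congr' ?_ using 3
  · refine sum_congr rfl fun k hk => ?_
    rw [mem_range] at hk
    rw [Nat.sub_self, Nat.factorial_zero, Nat.cast_one, mul_one,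
      show k + (n - 1 - k) + 1 = n by omega, show n - 1 - k + 1 = n - k by omega]
  · filter_upwards [eventually_ne_atTop 0, hγ0] with m hm hγm
    rw [rocS_eq hm hγm]
    rfl

theorem tendsto_rocS (hn : n ≠ 0) (hq : 0 < 1 - P) (hc : c ≠ 0)
    (hb : 1 - c / n * log (1 - P) ≠ 0) (hγ : Tendsto (fun m : ℕ => γ m / m) atTop (𝓝 c)) :
    Tendsto (fun m : ℕ => rocS n m (γ m) P) atTop
      (𝓝 ((1 - P) * (∑ j ∈ range n, exp ((1 - c / n * log (1 - P)) / c) *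
          (-((1 - c / n * log (1 - P)) / c)) ^ j / j.factorial) /
        (1 - c / n * log (1 - P)) ^ n)) := by
  convert tendsto_rocS_sum hn hq hc hb hγ using 2
  have hq' : (1 - P) ^ (((n : ℝ) - 1) / n)
      = (1 - P) * exp ((1 - c / n * log (1 - P)) / c) / exp (1 / c) := by
    calc (1 - P) ^ (((n : ℝ) - 1) / n)
        = exp (log (1 - P)) * exp ((1 - c / n * log (1 - P)) / c) / exp (1 / c) := by
          rw [rpow_def_of_pos hq, ← exp_add, ← exp_sub]
          congr 1
          field_simp
          ring
      _ = _ := by rw [exp_log hq]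
  rw [mul_sum, sum_div, mul_sum]
  refine sum_congr rfl fun k hk => ?_
  rw [hq', ← Nat.sub_add_cancel (mem_range.1 hk).le, pow_add,
    Nat.sub_add_cancel (mem_range.1 hk).le, neg_pow, div_pow, one_div_pow]
  generalize 1 - c / n * log (1 - P) = b at hb ⊢
  field_simp

end Limits

theorem asymptotic_roc_general (n : ℕ) (hn : 1 ≤ n) (P : ℝ) (hP : P ∈ Set.Ioo (0 : ℝ) 1)
    (c : ℝ) (hc : 0 < c) (γ : ℕ → ℝ)
    (hγ : Tendsto (fun m : ℕ => γ m / m) atTop (nhds c)) :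
    Tendsto (fun m : ℕ => 1 - rocS n m (γ m) P - (-1 : ℝ) ^ n * rocT n m (γ m) P) atTop
      (nhds (1 - (1 - P) / (1 - c / n * Real.log (1 - P)) ^ n)) := by
  obtain ⟨hP0, hP1⟩ := hP
  have hq : 0 < 1 - P := by linarith
  have hb : 0 < 1 - c / n * log (1 - P) := by
    have := mul_neg_of_pos_of_neg (div_pos hc (Nat.cast_pos.2 hn)) (log_neg hq (by linarith))
    linarith
  have hn0 : n ≠ 0 := by omega
  have hS := tendsto_rocS hn0 hq hc.ne' hb.ne' hγ
  have hT := tendsto_rocT hn0 hq hc.ne' hb.ne' hγ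
  convert (tendsto_const_nhds.sub hS).sub (hT.const_mul ((-1) ^ n)) using 2
  generalize 1 - c / n * log (1 - P) = b at hb ⊢
  rw [neg_pow b]
  field_simp
  ring

/-- Asymptotic ROC limit (Corollary 7 of the paper): as `m → ∞` with `γ_m/m → c`,
the exact detection probability `1 − S(m,γ_m,P) − (−1)^n T(m,γ_m,P)` converges to
`1 − (1−P)/(1 − (c/n)·ln(1−P))^n`. -/
theorem asymptotic_roc (n : ℕ) (hn : 1 ≤ n) (P : ℝ) (hP : P ∈ Set.Ioo (0 : ℝ) 1)
    (c : ℝ) (hc : 0 < c) (γ : ℕ → ℝ) (hγpos : ∀ m, 0 < γ m)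
    (hγ : Tendsto (fun m : ℕ => γ m / m) atTop (nhds c)) :
    Tendsto (fun m : ℕ => 1 - rocS n m (γ m) P - (-1 : ℝ) ^ n * rocT n m (γ m) P) atTop
      (nhds (1 - (1 - P) / (1 - c / n * Real.log (1 - P)) ^ n)) :=
  asymptotic_roc_general n hn P hP c hc γ hγ
end

section
/- Let n ≥ 1 and q ≥ 1 be integers, let a_1, …, a_n be pairwise distinct nonzero complex numbers, and let R > max_{1≤k≤n} |a_k| be real. Then (1/(2πi)) ∮_{|z|=R} e^z / (z^q · ∏_{k=1}^n (z − a_k)) dz = Σ_{k=1}^n [ e^{a_k} − Σ_{j=0}^{q−1} a_k^j / j! ] / ( a_k^q · ∏_{ℓ≠k} (a_k − a_ℓ) ), where the contour integral is taken counterclockwise over the circle of radius R centered at the origin. -/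
/-!
Partial fractions reduce everything to Cauchy's integral formula. With the Lagrange nodal
weights `w_k = ∏_{ℓ ≠ k} (a_k - a_ℓ)⁻¹` one has `1 / ∏_k (z - a_k) = ∑_k w_k / (z - a_k)`, and
for a single pole `a ≠ 0` the finite geometric series gives
`1 / (z^q (z - a)) = a^{-q} (1 / (z - a) - ∑_{j<q} a^j / z^{j+1})`.
Cauchy's formula for `exp` then evaluates `∮ e^z / (z - a) = 2πi e^a` and
`∮ e^z / z^{j+1} = 2πi / j!` on any circle `|z| = R > |a|`.
-/

open Complex Finset Metric
open scoped Real

theorem Lagrange.inv_prod_sub_eq_sum_nodalWeight_mul_inv_sub {F ι : Type*} [Field F]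
    [DecidableEq ι] {s : Finset ι} {v : ι → F} {x : F} (hvs : Set.InjOn v s) (hs : s.Nonempty)
    (hx : ∀ i ∈ s, x ≠ v i) :
    (∏ i ∈ s, (x - v i))⁻¹ = ∑ i ∈ s, Lagrange.nodalWeight s v i * (x - v i)⁻¹ := by
  refine inv_eq_of_mul_eq_one_right ?_
  simpa [Lagrange.interpolate_one hvs hs, Lagrange.eval_nodal] using
    (Lagrange.eval_interpolate_not_at_node 1 hx).symm

theorem inv_sub_sub_sum_range_pow_div_pow_succ {K : Type*} [Field K] {a z : K} (hz : z ≠ 0)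
    (hza : z ≠ a) (q : ℕ) :
    (z - a)⁻¹ - ∑ j ∈ range q, a ^ j / z ^ (j + 1) = a ^ q / (z ^ q * (z - a)) := by
  have hza' : z - a ≠ 0 := sub_ne_zero.2 hza
  induction q with
  | zero => simp
  | succ q ih =>
    rw [sum_range_succ, ← sub_sub, ih]
    field_simp
    ring

theorem circleIntegrable_exp_div {g : ℂ → ℂ} {R : ℝ} (hR : 0 ≤ R) (hg : Continuous g)
    (hg0 : ∀ z ∈ sphere (0 : ℂ) R, g z ≠ 0) :
    CircleIntegrable (fun z ↦ exp z / g z) 0 R :=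
  (continuous_exp.continuousOn.div hg.continuousOn hg0).circleIntegrable hR

theorem circleIntegral_exp_div_sub {R : ℝ} {w : ℂ} (hw : ‖w‖ < R) :
    (∮ z in C(0, R), exp z / (z - w)) = 2 * π * I * exp w := by
  have hw' : w ∈ ball (0 : ℂ) R := by simpa using hw
  simpa [smul_eq_mul, div_eq_inv_mul] using
    differentiable_exp.differentiableOn.circleIntegral_sub_inv_smul hw'

theorem circleIntegral_exp_div_pow_succ {R : ℝ} (hR : 0 < R) (m : ℕ) :
    (∮ z in C(0, R), exp z / z ^ (m + 1)) = 2 * π * I / m.factorial := by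
  simpa [iteratedDeriv_eq_iterate, iter_deriv_exp, div_eq_inv_mul] using
    differentiable_exp.differentiableOn.circleIntegral_one_div_sub_center_pow_smul
      (c := 0) hR m

theorem circleIntegral_exp_div_pow_mul_sub {R : ℝ} {a : ℂ} (ha : a ≠ 0) (haR : ‖a‖ < R)
    (q : ℕ) :
    (∮ z in C(0, R), exp z / (z ^ q * (z - a)))
      = 2 * π * I * (exp a - ∑ j ∈ range q, a ^ j / j.factorial) / a ^ q := by
  have hR : 0 < R := (norm_nonneg a).trans_lt haR
  have hz0 : ∀ z ∈ sphere (0 : ℂ) R, z ≠ 0 := fun z hz ↦ ne_of_mem_sphere hz hR.ne'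
  have hza : ∀ z ∈ sphere (0 : ℂ) R, z ≠ a := by
    rintro z hz rfl
    exact haR.ne (by simpa using hz)
  have hsplit : Set.EqOn (fun z ↦ exp z / (z ^ q * (z - a)))
      (fun z ↦ (a ^ q)⁻¹ • (exp z / (z - a) - ∑ j ∈ range q, a ^ j • (exp z / z ^ (j + 1))))
      (sphere 0 R) := by
    intro z hz
    have h := inv_sub_sub_sum_range_pow_div_pow_succ (hz0 z hz) (hza z hz) q
    dsimp only
    calc exp z / (z ^ q * (z - a))
        = (a ^ q)⁻¹ * exp z * (a ^ q / (z ^ q * (z - a))) := by field_simp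
      _ = _ := by
        rw [← h]
        simp only [smul_eq_mul, mul_sub, mul_sum]
        congr 1
        · ring
        · exact sum_congr rfl fun j _ ↦ by ring
  have hint_pole : CircleIntegrable (fun z ↦ exp z / (z - a)) 0 R :=
    circleIntegrable_exp_div hR.le (by fun_prop) fun z hz ↦ sub_ne_zero.2 (hza z hz)
  have hint_pow (j : ℕ) : CircleIntegrable (fun z ↦ a ^ j • (exp z / z ^ (j + 1))) 0 R :=
    (circleIntegrable_exp_div hR.le (by fun_prop) fun z hz ↦ pow_ne_zero _ (hz0 z hz)).const_smul
  rw [circleIntegral.integral_congr hR.le hsplit, circleIntegral.integral_smul,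
    circleIntegral.integral_sub hint_pole (.fun_sum _ fun j _ ↦ hint_pow j),
    circleIntegral.integral_fun_sum fun j _ ↦ hint_pow j, circleIntegral_exp_div_sub haR]
  simp only [circleIntegral.integral_smul, circleIntegral_exp_div_pow_succ hR]
  simp only [smul_eq_mul]
  field_simp
  simp only [mul_sub, mul_sum, mul_div_assoc]

theorem residue_evaluation_general (n q : ℕ) (hn : 1 ≤ n)
    (a : Fin n → ℂ) (ha0 : ∀ k, a k ≠ 0) (hinj : Function.Injective a)
    (R : ℝ) (hR : ∀ k, ‖a k‖ < R) :
    (1 / (2 * (Real.pi : ℂ) * Complex.I)) *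
        (∮ z in C(0, R), Complex.exp z / (z ^ q * ∏ k, (z - a k)))
      = ∑ k, (Complex.exp (a k) - ∑ j ∈ Finset.range q, a k ^ j / j.factorial) /
          (a k ^ q * ∏ ℓ ∈ Finset.univ.erase k, (a k - a ℓ)) := by
  have hR0 : 0 < R := (norm_nonneg _).trans_lt (hR ⟨0, hn⟩)
  have hza : ∀ z ∈ sphere (0 : ℂ) R, ∀ k, z ≠ a k := by
    rintro z hz k rfl
    exact (hR k).ne (by simpa using hz)
  have hsplit : Set.EqOn (fun z ↦ exp z / (z ^ q * ∏ k, (z - a k)))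
      (fun z ↦ ∑ k, Lagrange.nodalWeight univ a k • (exp z / (z ^ q * (z - a k))))
      (sphere 0 R) := by
    intro z hz
    have hpf := Lagrange.inv_prod_sub_eq_sum_nodalWeight_mul_inv_sub hinj.injOn
      (univ_nonempty_iff.2 ⟨⟨0, hn⟩⟩) fun k _ ↦ hza z hz k
    simp only [div_eq_mul_inv, mul_inv, hpf, mul_sum, smul_eq_mul]
    exact sum_congr rfl fun k _ ↦ by ring
  have hint (k : Fin n) : CircleIntegrable
      (fun z ↦ Lagrange.nodalWeight univ a k • (exp z / (z ^ q * (z - a k)))) 0 R :=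
    (circleIntegrable_exp_div hR0.le (by fun_prop) fun z hz ↦
      mul_ne_zero (pow_ne_zero _ (ne_of_mem_sphere hz hR0.ne'))
        (sub_ne_zero.2 (hza z hz k))).const_smul
  rw [circleIntegral.integral_congr hR0.le hsplit, circleIntegral.integral_fun_sum fun k _ ↦ hint k,
    mul_sum]
  refine sum_congr rfl fun k _ ↦ ?_
  rw [circleIntegral.integral_smul, circleIntegral_exp_div_pow_mul_sub (ha0 k) (hR k),
    smul_eq_mul, Lagrange.nodalWeight, prod_inv_distrib]
  field_simp

/-- Residue evaluation of the rank-one HCIZ contour integral (Appendix A): for pairwise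
distinct nonzero `a_1,…,a_n` and `R > max |a_k|`,
`(1/(2πi)) ∮_{|z|=R} e^z/(z^q ∏_k (z−a_k)) dz
  = Σ_k [e^{a_k} − Σ_{j<q} a_k^j/j!] / (a_k^q ∏_{ℓ≠k} (a_k − a_ℓ))`. -/
theorem residue_evaluation (n q : ℕ) (hn : 1 ≤ n) (hq : 1 ≤ q)
    (a : Fin n → ℂ) (ha0 : ∀ k, a k ≠ 0) (hinj : Function.Injective a)
    (R : ℝ) (hR : ∀ k, ‖a k‖ < R) :
    (1 / (2 * (Real.pi : ℂ) * Complex.I)) *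
        (∮ z in C(0, R), Complex.exp z / (z ^ q * ∏ k, (z - a k)))
      = ∑ k, (Complex.exp (a k) - ∑ j ∈ Finset.range q, a k ^ j / j.factorial) /
          (a k ^ q * ∏ ℓ ∈ Finset.univ.erase k, (a k - a ℓ)) :=
  residue_evaluation_general n q hn a ha0 hinj R hR
end

section
/- Let n ≥ 1 and N ≥ 1 be integers and let z be a complex number with z ≠ 1. Then Σ_{k=0}^{N−1} ((n+k−1)!/k!)·z^k = Σ_{k=0}^{n−1} ((n−1)!·(n−1)!/(k!·(n−1−k)!))·z^k/(1−z)^{k+1} − Σ_{k=0}^{n−1} ((n−1)!·(N+n−1)!/((k+N)!·(n−1−k)!))·z^{N+k}/(1−z)^{k+1}. -/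
/-- Finite-sum identity used to remove the `m`-dependent upper summation limit:
for integers `n, N ≥ 1` and complex `z ≠ 1`,
`Σ_{k=0}^{N−1} ((n+k−1)!/k!)·z^k
  = Σ_{k=0}^{n−1} ((n−1)!(n−1)!/(k!(n−1−k)!))·z^k/(1−z)^{k+1}
    − Σ_{k=0}^{n−1} ((n−1)!(N+n−1)!/((k+N)!(n−1−k)!))·z^{N+k}/(1−z)^{k+1}`. -/
theorem finite_sum_identity (n N : ℕ) (hn : 1 ≤ n) (hN : 1 ≤ N) (z : ℂ) (hz : z ≠ 1) :
    ∑ k ∈ Finset.range N, ((n + k - 1).factorial / (k.factorial : ℂ)) * z ^ k =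
      ∑ k ∈ Finset.range n,
        (((n - 1).factorial * (n - 1).factorial : ℕ) /
          ((k.factorial * (n - 1 - k).factorial : ℕ) : ℂ)) * z ^ k / (1 - z) ^ (k + 1)
      - ∑ k ∈ Finset.range n,
        (((n - 1).factorial * (N + n - 1).factorial : ℕ) /
          (((k + N).factorial * (n - 1 - k).factorial : ℕ) : ℂ)) * z ^ (N + k) / (1 - z) ^ (k + 1) := by
  obtain ⟨m, rfl⟩ : ∃ m, n = m + 1 := ⟨n - 1, (Nat.succ_pred_eq_of_pos hn).symm⟩
  have h1 : (1 : ℂ) - z ≠ 0 := sub_ne_zero.mpr (Ne.symm hz)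
  have hfac : ∀ a : ℕ, ((a.factorial : ℂ)) ≠ 0 := fun a =>
    Nat.cast_ne_zero.mpr (Nat.factorial_ne_zero a)
  -- the "boundary" sum
  set B : ℕ → ℂ := fun M => ∑ k ∈ Finset.range (m + 1),
      (((M + m).factorial * m.descFactorial k : ℕ) : ℂ) * z ^ (M + k)
        / (((k + M).factorial : ℂ) * (1 - z) ^ (k + 1)) with hB
  -- the telescoping step identity
  have hstep : ∀ M : ℕ, B M - B (M + 1) =
      (((M + m).factorial : ℂ) / (M.factorial : ℂ)) * z ^ M := by
    intro M
    have hsum : B M - B (M + 1) = ∑ k ∈ Finset.range (m + 1),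
        ((((M + m).factorial * m.descFactorial k : ℕ) : ℂ) * z ^ (M + k)
            / (((k + M).factorial : ℂ) * (1 - z) ^ (k + 1))
          - (((M + 1 + m).factorial * m.descFactorial k : ℕ) : ℂ) * z ^ (M + 1 + k)
            / (((k + (M + 1)).factorial : ℂ) * (1 - z) ^ (k + 1))) := by
      rw [hB, ← Finset.sum_sub_distrib]
    set g : ℕ → ℂ := fun k =>
      (((M + m).factorial * m.descFactorial k : ℕ) : ℂ) * z ^ (M + k)
        / (((k + M).factorial : ℂ) * (1 - z) ^ k) with hg
    have hterm : ∀ k ∈ Finset.range (m + 1),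
        (((M + m).factorial * m.descFactorial k : ℕ) : ℂ) * z ^ (M + k)
            / (((k + M).factorial : ℂ) * (1 - z) ^ (k + 1))
          - (((M + 1 + m).factorial * m.descFactorial k : ℕ) : ℂ) * z ^ (M + 1 + k)
            / (((k + (M + 1)).factorial : ℂ) * (1 - z) ^ (k + 1))
        = g k - g (k + 1) := by
      intro k hk
      have hkm : k ≤ m := Nat.lt_succ_iff.mp (Finset.mem_range.mp hk)
      have e1 : (M + 1 + m).factorial = (M + m + 1) * (M + m).factorial := by
        rw [show M + 1 + m = M + m + 1 by ring, Nat.factorial_succ]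
      have e2 : (k + (M + 1)).factorial = (k + M + 1) * (k + M).factorial := by
        rw [show k + (M + 1) = k + M + 1 by ring, Nat.factorial_succ]
      have e2' : (k + 1 + M).factorial = (k + M + 1) * (k + M).factorial := by
        rw [show k + 1 + M = k + M + 1 by ring, Nat.factorial_succ]
      have e3 : m.descFactorial (k + 1) = (m - k) * m.descFactorial k :=
        Nat.descFactorial_succ m k
      rw [hg]
      simp only [e1, e2, e2', e3]
      have hz2 : ((k + M).factorial : ℂ) ≠ 0 := hfac _
      have hz3 : ((M + m).factorial : ℂ) ≠ 0 := hfac _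
      push_cast [Nat.cast_sub hkm]
      have hck : ((k : ℂ) + (M : ℂ) + 1) ≠ 0 := by
        have : ((k + M + 1 : ℕ) : ℂ) ≠ 0 := Nat.cast_ne_zero.mpr (by omega)
        push_cast at this
        exact this
      field_simp
      ring
    rw [hsum, Finset.sum_congr rfl hterm, Finset.sum_range_sub' g]
    have hgz : g (m + 1) = 0 := by
      rw [hg]
      simp [Nat.descFactorial_of_lt (Nat.lt_succ_self m)]
    rw [hgz, hg]
    simp only [Nat.descFactorial_zero, Nat.mul_one, Nat.add_zero, Nat.zero_add, pow_zero, mul_one]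
    ring
  -- main induction
  have hmain : ∀ M : ℕ,
      ∑ k ∈ Finset.range M, (((k + m).factorial : ℂ) / (k.factorial : ℂ)) * z ^ k
        = B 0 - B M := by
    intro M
    induction M with
    | zero => simp
    | succ M ih =>
        rw [Finset.sum_range_succ, ih]
        linear_combination -hstep M
  have hLHS : ∀ k : ℕ, m + 1 + k - 1 = k + m := fun k => by omega
  simp_rw [hLHS]
  rw [hmain N]
  congr 1
  · -- B 0 equals the first statement sum
    rw [hB]
    apply Finset.sum_congr rfl
    intro k hk
    have hkm : k ≤ m := Nat.lt_succ_iff.mp (Finset.mem_range.mp hk)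
    have key : ((m.factorial : ℕ) : ℂ)
        = (((m - k).factorial : ℕ) : ℂ) * ((m.descFactorial k : ℕ) : ℂ) := by
      exact_mod_cast congrArg (Nat.cast (R := ℂ))
        (Nat.factorial_mul_descFactorial hkm).symm
    simp only [Nat.zero_add, Nat.add_zero, Nat.add_sub_cancel]
    have hco : ((m.factorial * m.factorial : ℕ) : ℂ)
          / ((k.factorial * (m - k).factorial : ℕ) : ℂ)
        = ((m.factorial * m.descFactorial k : ℕ) : ℂ) / ((k.factorial : ℕ) : ℂ) := by
      push_cast
      rw [div_eq_div_iff (by exact mul_ne_zero (hfac k) (hfac (m - k))) (hfac k)]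
      push_cast at key
      linear_combination ((m.factorial : ℂ) * (k.factorial : ℂ)) * key
    rw [hco, div_mul_eq_div_div, mul_div_right_comm]
  · -- B N equals the second statement sum
    rw [hB]
    apply Finset.sum_congr rfl
    intro k hk
    have hkm : k ≤ m := Nat.lt_succ_iff.mp (Finset.mem_range.mp hk)
    have key : ((m.factorial : ℕ) : ℂ)
        = (((m - k).factorial : ℕ) : ℂ) * ((m.descFactorial k : ℕ) : ℂ) := by
      exact_mod_cast congrArg (Nat.cast (R := ℂ))
        (Nat.factorial_mul_descFactorial hkm).symm
    have hNm : N + (m + 1) - 1 = N + m := by omega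
    simp only [hNm, Nat.add_sub_cancel]
    have hco : ((m.factorial * (N + m).factorial : ℕ) : ℂ)
          / (((k + N).factorial * (m - k).factorial : ℕ) : ℂ)
        = (((N + m).factorial * m.descFactorial k : ℕ) : ℂ)
          / (((k + N).factorial : ℕ) : ℂ) := by
      push_cast
      rw [div_eq_div_iff (by exact mul_ne_zero (hfac (k + N)) (hfac (m - k))) (hfac (k + N))]
      push_cast at key
      linear_combination (((N + m).factorial : ℂ) * ((k + N).factorial : ℂ)) * key
    rw [hco, div_mul_eq_div_div, mul_div_right_comm]
end

section
/- Fix an integer n ≥ 1, a real number P ∈ (0,1), and a real number c > 0, and set D = 1 − (c/n)·ln(1−P) (note D > 0). Let γ : ℕ → ℝ be a sequence with γ_m > 0 for all m and γ_m/m → c as m → ∞. Then lim_{m→∞} S(m, γ_m, P) = (1−P)^{(n−1)/n} · e^{1/c} · Σ_{k=0}^{n−1} ((−1)^k/(k!·c^k)) · D^{−(n−k)}. -/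
/-!
Write each summand of `S` as a constant times `(m+k-1)!/((m-1)! γ^k) · γ^{-(n-1-k-ℓ)}` times
`(1-P)^{…}` over the `(ℓ+1)`-st power of `1 + γ(1 - (1-P)^{1/(mn)})`. Along `γ_m/m → c` the
factorial ratio tends to `c^{-k}`, the extra power of `γ⁻¹` kills every summand with
`k + ℓ + 1 < n`, the rpow tends to `(1-P)^{(n-1)/n}`, and since `e^x - 1 ~ x` at `0` the
denominator tends to `D`. The prefactor `(1+1/γ)^{m-n}` tends to `e^{1/c}`, as for
`(1 + 1/m)^m → e`.
-/

open Filter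

open Topology Asymptotics

lemma Real.isEquivalent_exp_sub_one : (fun x : ℝ => Real.exp x - 1) ~[𝓝 0] id := by
  have h := (Real.hasDerivAt_exp 0).isLittleO
  simp only [Real.exp_zero, sub_zero, smul_eq_mul, mul_one] at h
  exact h.isEquivalent

lemma Filter.Tendsto.mul_exp_sub_one {α : Type*} {l : Filter α} {u x : α → ℝ} {L : ℝ}
    (hx : Tendsto x l (𝓝 0)) (hux : Tendsto (fun a => u a * x a) l (𝓝 L)) :
    Tendsto (fun a => u a * (Real.exp (x a) - 1)) l (𝓝 L) :=
  ((IsEquivalent.refl (u := u)).mul (Real.isEquivalent_exp_sub_one.comp_tendsto hx)).symm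
    |>.tendsto_nhds hux

section

variable {γ : ℕ → ℝ}

lemma tendsto_mul_one_sub_rpow_inv_mul {c : ℝ} (hγ : Tendsto (fun m : ℕ => γ m / m) atTop (𝓝 c))
    {b : ℝ} (hb : 0 < b) (N : ℝ) :
    Tendsto (fun m : ℕ => γ m * (1 - b ^ (1 / ((m : ℝ) * N)))) atTop
      (𝓝 (-(c / N * Real.log b))) := by
  have hx : Tendsto (fun m : ℕ => Real.log b / N / m) atTop (𝓝 0) :=
    tendsto_const_nhds.div_atTop tendsto_natCast_atTop_atTop
  have hγx : Tendsto (fun m : ℕ => γ m * (Real.log b / N / m)) atTop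
      (𝓝 (c * (Real.log b / N))) :=
    (hγ.mul_const _).congr fun m => by ring
  rw [show c / N * Real.log b = c * (Real.log b / N) by ring]
  refine (hx.mul_exp_sub_one hγx).neg.congr fun m => ?_
  rw [Real.rpow_def_of_pos hb]
  ring_nf

lemma tendsto_natCast_div_of_tendsto_div {c : ℝ} (hγ : Tendsto (fun m : ℕ => γ m / m) atTop (𝓝 c))
    (hc : c ≠ 0) : Tendsto (fun m : ℕ => (m : ℝ) / γ m) atTop (𝓝 c⁻¹) := by
  simpa only [inv_div] using hγ.inv₀ hc

variable {a : ℝ} (hmγ : Tendsto (fun m : ℕ => (m : ℝ) / γ m) atTop (𝓝 a))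
include hmγ

lemma tendsto_inv_of_tendsto_natCast_div : Tendsto (fun m => (γ m)⁻¹) atTop (𝓝 0) := by
  have h := hmγ.mul (tendsto_inv_atTop_zero.comp tendsto_natCast_atTop_atTop)
  rw [mul_zero] at h
  refine h.congr' ?_
  filter_upwards [eventually_ne_atTop 0] with m hm
  simp [field]

lemma tendsto_one_add_one_div_pow_sub (n : ℕ) :
    Tendsto (fun m => (1 + 1 / γ m) ^ (m - n)) atTop (𝓝 (Real.exp a)) := by
  have hinv : Tendsto (fun m => 1 + 1 / γ m) atTop (𝓝 1) := by
    simpa only [one_div, add_zero] using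
      tendsto_const_nhds.add (tendsto_inv_of_tendsto_natCast_div hmγ)
  have hpow : Tendsto (fun m => (1 + 1 / γ m) ^ m) atTop (𝓝 (Real.exp a)) :=
    Real.tendsto_one_add_pow_exp_of_tendsto (hmγ.congr fun m => (mul_one_div _ _).symm)
  have h := hpow.mul ((hinv.pow n).inv₀ (by simp))
  rw [one_pow, inv_one, mul_one] at h
  refine h.congr' ?_
  filter_upwards [eventually_ge_atTop n, hinv.eventually_ne one_ne_zero] with m hm hne
  exact (pow_sub₀ _ hne hm).symm

lemma tendsto_factorial_div_factorial_mul_pow (k : ℕ) :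
    Tendsto (fun m => ((m + k - 1).factorial : ℝ) / ((m - 1).factorial * γ m ^ k)) atTop
      (𝓝 (a ^ k)) := by
  induction k with
  | zero =>
    simpa only [add_zero, pow_zero, mul_one] using
      tendsto_const_nhds.congr fun m => (div_self (by positivity)).symm
  | succ k ih =>
    have hstep : Tendsto (fun m : ℕ => ((m : ℝ) + k) / γ m) atTop (𝓝 a) := by
      simpa only [add_div, mul_zero, add_zero, div_eq_mul_inv, add_mul] using
        hmγ.add ((tendsto_inv_of_tendsto_natCast_div hmγ).const_mul (k : ℝ))
    refine (ih.mul hstep).congr' ?_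
    filter_upwards [eventually_ge_atTop 1] with m hm
    obtain ⟨j, rfl⟩ := Nat.exists_eq_add_of_le' hm
    simp only [Nat.add_sub_cancel, show j + 1 + (k + 1) - 1 = j + k + 1 by omega,
      show j + 1 + k - 1 = j + k by omega, Nat.factorial_succ, pow_succ]
    push_cast
    ring

end

noncomputable def rocTerm (n m : ℕ) (γ P : ℝ) (k ℓ : ℕ) : ℝ :=
  ((-1 : ℝ) ^ k * (m + k - 1).factorial /
      ((m - 1).factorial * k.factorial * (n - 1 - k - ℓ).factorial *
        (k + ℓ + 1).factorial * γ ^ (n - ℓ - 1))) *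
    (1 - P) ^ (((m : ℝ) * ((n : ℝ) - 1) + ℓ + 1) / ((m : ℝ) * n)) /
    (1 + γ * (1 - (1 - P) ^ (1 / ((m : ℝ) * (n : ℝ))))) ^ (ℓ + 1)

lemma rocS_eq_sum_rocTerm (n m : ℕ) (γ P : ℝ) :
    rocS n m γ P = n.factorial * (1 + 1 / γ) ^ (m - n) *
      ∑ k ∈ Finset.range n, ∑ ℓ ∈ Finset.range (n - k), rocTerm n m γ P k ℓ :=
  rfl

lemma rocTerm_eq {n k ℓ : ℕ} (h : k + ℓ < n) (m : ℕ) (γ P : ℝ) :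
    rocTerm n m γ P k ℓ =
      (-1 : ℝ) ^ k / (k.factorial * (n - 1 - k - ℓ).factorial * (k + ℓ + 1).factorial) *
        ((m + k - 1).factorial / ((m - 1).factorial * γ ^ k)) * γ⁻¹ ^ (n - 1 - k - ℓ) *
        (1 - P) ^ (((m : ℝ) * ((n : ℝ) - 1) + ℓ + 1) / ((m : ℝ) * n)) /
        (1 + γ * (1 - (1 - P) ^ (1 / ((m : ℝ) * (n : ℝ))))) ^ (ℓ + 1) := by
  rw [rocTerm, show n - ℓ - 1 = k + (n - 1 - k - ℓ) by omega, pow_add, inv_pow]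
  ring

lemma tendsto_rpow_mul_add_div (n ℓ : ℕ) (hn : n ≠ 0) {b : ℝ} (hb : b ≠ 0) :
    Tendsto (fun m : ℕ => b ^ (((m : ℝ) * ((n : ℝ) - 1) + ℓ + 1) / ((m : ℝ) * n))) atTop
      (𝓝 (b ^ (((n : ℝ) - 1) / n))) := by
  have he : Tendsto (fun m : ℕ => ((n : ℝ) - 1) / n + (ℓ + 1) / n / m) atTop
      (𝓝 (((n : ℝ) - 1) / n)) := by
    simpa only [add_zero] using tendsto_const_nhds.add
      (tendsto_const_nhds.div_atTop (tendsto_natCast_atTop_atTop (R := ℝ)))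
  refine (tendsto_const_nhds.rpow he (Or.inl hb)).congr' ?_
  filter_upwards [eventually_ne_atTop 0] with m hm
  congr 1
  field_simp
  ring

section

variable {n : ℕ} {γ : ℕ → ℝ} {a P D : ℝ} (hmγ : Tendsto (fun m : ℕ => (m : ℝ) / γ m) atTop (𝓝 a))
  (hP : P ≠ 1)
  (hden : Tendsto (fun m : ℕ => 1 + γ m * (1 - (1 - P) ^ (1 / ((m : ℝ) * (n : ℝ))))) atTop (𝓝 D))
  (hD : D ≠ 0)
include hmγ hP hden hD

lemma tendsto_rocTerm {k ℓ : ℕ} (h : k + ℓ < n) :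
    Tendsto (fun m => rocTerm n m (γ m) P k ℓ) atTop
      (𝓝 ((-1 : ℝ) ^ k / (k.factorial * (n - 1 - k - ℓ).factorial * (k + ℓ + 1).factorial) *
        a ^ k * 0 ^ (n - 1 - k - ℓ) * (1 - P) ^ (((n : ℝ) - 1) / n) / D ^ (ℓ + 1))) := by
  simp only [rocTerm_eq h]
  exact ((((tendsto_const_nhds.mul (tendsto_factorial_div_factorial_mul_pow hmγ k)).mul
    ((tendsto_inv_of_tendsto_natCast_div hmγ).pow _)).mul
    (tendsto_rpow_mul_add_div n ℓ (by omega) (sub_ne_zero.mpr hP.symm))).div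
    (hden.pow _) (pow_ne_zero _ hD))

lemma tendsto_sum_rocTerm {k : ℕ} (hk : k < n) :
    Tendsto (fun m => ∑ ℓ ∈ Finset.range (n - k), rocTerm n m (γ m) P k ℓ) atTop
      (𝓝 ((-1 : ℝ) ^ k / (k.factorial * n.factorial) * a ^ k *
        (1 - P) ^ (((n : ℝ) - 1) / n) / D ^ (n - k))) := by
  have hsum := tendsto_finsetSum (Finset.range (n - k)) fun ℓ hℓ =>
    tendsto_rocTerm hmγ hP hden hD (k := k) (ℓ := ℓ) (by rw [Finset.mem_range] at hℓ; omega)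
  rw [Finset.sum_eq_single_of_mem (n - 1 - k) (Finset.mem_range.mpr (by omega)) fun ℓ hℓ hne => by
    simp [zero_pow (show n - 1 - k - ℓ ≠ 0 by rw [Finset.mem_range] at hℓ; omega)]] at hsum
  rwa [show n - 1 - k - (n - 1 - k) = 0 by omega, show k + (n - 1 - k) + 1 = n by omega,
    show n - 1 - k + 1 = n - k by omega, Nat.factorial_zero, Nat.cast_one, mul_one,
    pow_zero, mul_one] at hsum

end

theorem S_limit_general (n : ℕ) (P : ℝ) (hP : P ∈ Set.Ioo (0 : ℝ) 1)
    (c : ℝ) (hc : 0 < c) (D : ℝ) (hD : D = 1 - c / n * Real.log (1 - P))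
    (γ : ℕ → ℝ)
    (hγ : Tendsto (fun m : ℕ => γ m / m) atTop (nhds c)) :
    Tendsto (fun m : ℕ => rocS n m (γ m) P) atTop
      (nhds ((1 - P) ^ (((n : ℝ) - 1) / n) * Real.exp (1 / c) *
        ∑ k ∈ Finset.range n, ((-1 : ℝ) ^ k / (k.factorial * c ^ k)) * (D ^ (n - k))⁻¹)) := by
  obtain ⟨hP0, hP1⟩ := hP
  have hmγ := tendsto_natCast_div_of_tendsto_div hγ hc.ne'
  have hDpos : 0 < D := by
    have : c / n * Real.log (1 - P) ≤ 0 :=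
      mul_nonpos_of_nonneg_of_nonpos (by positivity) (Real.log_nonpos (by linarith) (by linarith))
    linarith
  have hden : Tendsto (fun m : ℕ => 1 + γ m * (1 - (1 - P) ^ (1 / ((m : ℝ) * (n : ℝ))))) atTop
      (𝓝 D) := by
    simpa only [hD, ← sub_eq_add_neg] using
      tendsto_const_nhds.add (tendsto_mul_one_sub_rpow_inv_mul hγ (sub_pos.mpr hP1) n)
  have hlim := ((tendsto_const_nhds (x := (n.factorial : ℝ))).mul
    (tendsto_one_add_one_div_pow_sub hmγ n)).mul
    (tendsto_finsetSum _ fun k hk =>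
      tendsto_sum_rocTerm hmγ hP1.ne hden hDpos.ne' (Finset.mem_range.mp hk))
  convert hlim.congr fun m => (rocS_eq_sum_rocTerm n m (γ m) P).symm using 2
  rw [Finset.mul_sum, Finset.mul_sum]
  refine Finset.sum_congr rfl fun k _ => ?_
  rw [inv_pow]
  field_simp

/-- Limit (Slimit) of Appendix D: as `m → ∞` with `γ_m/m → c > 0`,
`S(m,γ_m,P) → (1−P)^{(n−1)/n}·e^{1/c}·Σ_{k=0}^{n−1} ((−1)^k/(k!c^k))·D^{−(n−k)}`
where `D = 1 − (c/n)·ln(1−P)`. -/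
theorem S_limit (n : ℕ) (hn : 1 ≤ n) (P : ℝ) (hP : P ∈ Set.Ioo (0 : ℝ) 1)
    (c : ℝ) (hc : 0 < c) (D : ℝ) (hD : D = 1 - c / n * Real.log (1 - P))
    (γ : ℕ → ℝ) (hγpos : ∀ m, 0 < γ m)
    (hγ : Tendsto (fun m : ℕ => γ m / m) atTop (nhds c)) :
    Tendsto (fun m : ℕ => rocS n m (γ m) P) atTop
      (nhds ((1 - P) ^ (((n : ℝ) - 1) / n) * Real.exp (1 / c) *
        ∑ k ∈ Finset.range n, ((-1 : ℝ) ^ k / (k.factorial * c ^ k)) * (D ^ (n - k))⁻¹)) :=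
  S_limit_general n P hP c hc D hD γ hγ
end

section
/- Fix real numbers γ > 0 and P ∈ (0,1). Then lim_{m→∞} m · [ (1 − (1−P)/(1 + γ − γ·(1−P)^{1/m})) − P ] = −γ·(1−P)·ln(1−P). -/
/-!
The detection probability exceeds `P` by exactly `γ(1-P)(1-e)/(1+γ-γe)` with `e = (1-P)^{1/m}`.
Since `m(e - 1) → log(1-P)` (the derivative of `t ↦ (1-P)^t` at `0`) and the denominator tends
to `1`, the scaled excess tends to `-γ(1-P)log(1-P)`.
-/

open Filter Topology

lemma tendsto_natCast_mul_rpow_one_div_sub_one {x : ℝ} (hx : 0 < x) :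
    Tendsto (fun m : ℕ => (m : ℝ) * (x ^ (1 / (m : ℝ)) - 1)) atTop (𝓝 (Real.log x)) := by
  have hinv : Tendsto (fun m : ℕ => 1 / (m : ℝ)) atTop (𝓝[>] 0) :=
    tendsto_nhdsWithin_iff.2 ⟨tendsto_one_div_atTop_nhds_zero_nat,
      eventually_gt_atTop 0 |>.mono fun m hm => by simpa using hm⟩
  refine ((tendsto_rpow_sub_one_log hx).comp hinv).congr fun m => ?_
  simp

lemma tendsto_rpow_one_div_natCast {x : ℝ} (hx : x ≠ 0) :
    Tendsto (fun m : ℕ => x ^ (1 / (m : ℝ))) atTop (𝓝 1) := by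
  have h := (Real.continuousAt_const_rpow (b := 0) hx).tendsto.comp
    tendsto_one_div_atTop_nhds_zero_nat
  rwa [Real.rpow_zero] at h

theorem detection_probability_expansion_general (γ P : ℝ) (hP : P ∈ Set.Ioo (0 : ℝ) 1) :
    Tendsto
      (fun m : ℕ =>
        (m : ℝ) * ((1 - (1 - P) / (1 + γ - γ * (1 - P) ^ (1 / (m : ℝ)))) - P))
      atTop (nhds (-γ * (1 - P) * Real.log (1 - P))) := by
  have hq : 0 < 1 - P := by linarith [hP.2]
  have hden : Tendsto (fun m : ℕ => 1 + γ - γ * (1 - P) ^ (1 / (m : ℝ))) atTop (𝓝 1) := by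
    have h := (tendsto_const_nhds (x := 1 + γ)).sub
      ((tendsto_rpow_one_div_natCast hq.ne').const_mul γ)
    rwa [mul_one, add_sub_cancel_right] at h
  have hlim := ((tendsto_natCast_mul_rpow_one_div_sub_one hq).const_mul (-γ * (1 - P))).div
    hden one_ne_zero
  rw [div_one] at hlim
  refine hlim.congr' ?_
  filter_upwards [hden.eventually_ne one_ne_zero] with m hD
  rw [Pi.div_apply]
  field_simp
  ring

/-- First-order expansion of the `n = 1`, `p = m` detection probability:
`m·[(1 − (1−P)/(1 + γ − γ(1−P)^{1/m})) − P] → −γ(1−P)ln(1−P)` as `m → ∞`. -/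
theorem detection_probability_expansion (γ P : ℝ) (hγ : 0 < γ) (hP : P ∈ Set.Ioo (0 : ℝ) 1) :
    Tendsto
      (fun m : ℕ =>
        (m : ℝ) * ((1 - (1 - P) / (1 + γ - γ * (1 - P) ^ (1 / (m : ℝ)))) - P))
      atTop (nhds (-γ * (1 - P) * Real.log (1 - P))) :=
  detection_probability_expansion_general γ P hP
end

section
/- Let N ≥ 0, β ≥ 1 and k be integers with 0 ≤ k ≤ β−1, and define the polynomial J(s) = Σ_{j=0}^{N} (−1)^j · binom(N,j) · ((N+β+1)_j / j!) · (1−s)^j, where (q)_j denotes the Pochhammer symbol (rising factorial). Then ∫_0^1 s^{β−k−1} · J(s) ds = (−1)^N · (N+k)! · (β−k−1)! / (k! · (N+β−k)!). -/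
/-- The polynomial `J(s) = Σ_{j=0}^{N} (−1)^j·C(N,j)·((N+β+1)_j/j!)·(1−s)^j`,
i.e. the Jacobi polynomial `P_N^{(0,β)}(2s−1)`. -/
noncomputable def Jpoly (N β : ℕ) (s : ℝ) : ℝ :=
  ∑ j ∈ Finset.range (N + 1),
    (-1 : ℝ) ^ j * (N.choose j) *
      ((ascPochhammer ℝ j).eval ((N : ℝ) + β + 1) / j.factorial) * (1 - s) ^ j

/-! Expanding `J` in powers of `1 - s`, each term integrates to a Beta value
`∫₀¹ s^m (1-s)^j ds = m! j! / (m+j+1)!`, and with `x = N + β` the Pochhammer factor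
`(x+1)_j = (x+j)!/x!` turns the `j`-th term into a multiple of `(-1)^j C(N,j) C(x+j, N+k)`.
The alternating sum of these is an `N`-th forward difference of `y ↦ C(y, N+k)`, namely
`(-1)^N C(x, k)`, and `C(x, k)/x! = 1/(k! (N+β-k)!)` gives the result. -/

open Finset Nat

theorem integral_pow_mul_one_sub_pow (m j : ℕ) :
    ∫ s in (0 : ℝ)..1, s ^ m * (1 - s) ^ j = (m ! * j ! : ℝ) / (m + j + 1)! := by
  induction j generalizing m with
  | zero =>
    simp only [pow_zero, mul_one, integral_pow, one_pow, zero_pow m.succ_ne_zero, sub_zero,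
      factorial_zero, add_zero, factorial_succ, cast_mul, cast_succ, cast_zero, zero_add]
    field_simp
  | succ j ih =>
    have hintegrable (p q : ℕ) :
        IntervalIntegrable (fun s : ℝ ↦ s ^ p * (1 - s) ^ q) MeasureTheory.volume 0 1 :=
      (by fun_prop : Continuous fun s : ℝ ↦ s ^ p * (1 - s) ^ q).intervalIntegrable 0 1
    have hsplit (s : ℝ) :
        s ^ m * (1 - s) ^ (j + 1) = s ^ m * (1 - s) ^ j - s ^ (m + 1) * (1 - s) ^ j := by
      ring
    simp_rw [hsplit]
    rw [intervalIntegral.integral_sub (hintegrable m j) (hintegrable (m + 1) j), ih, ih,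
      show m + 1 + j + 1 = m + j + 1 + 1 by omega, show m + (j + 1) + 1 = m + j + 1 + 1 by omega]
    push_cast [factorial_succ]
    field_simp
    ring

theorem sum_neg_one_pow_mul_choose_mul_choose (N x k : ℕ) :
    ∑ j ∈ range (N + 1), (-1 : ℤ) ^ j * N.choose j * (x + j).choose (N + k) =
      (-1) ^ N * x.choose k := by
  have hdiff := congr_fun (fwdDiff_iter_choose k N) x
  rw [fwdDiff_iter_eq_sum_shift] at hdiff
  rw [← hdiff, mul_sum]
  refine sum_congr rfl fun j hj ↦ ?_
  have hjN : j ≤ N := Nat.lt_succ_iff.mp (mem_range.mp hj)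
  rw [smul_eq_mul, nsmul_one, cast_id, ← mul_assoc, ← mul_assoc, ← pow_add,
    show N + (N - j) = j + 2 * (N - j) by omega, pow_add, pow_mul, neg_one_sq, one_pow, mul_one]

theorem integral_pow_mul_Jpoly_eq_sum (N β m : ℕ) :
    ∫ s in (0 : ℝ)..1, s ^ m * Jpoly N β s =
      ∑ j ∈ range (N + 1), (-1 : ℝ) ^ j * N.choose j *
        ((ascPochhammer ℝ j).eval ((N : ℝ) + β + 1) / j !) *
          ((m ! * j ! : ℝ) / (m + j + 1)!) := by
  simp_rw [Jpoly, mul_sum, ← integral_pow_mul_one_sub_pow]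
  rw [intervalIntegral.integral_finsetSum fun j _ ↦
    (by fun_prop : Continuous _).intervalIntegrable 0 1]
  refine sum_congr rfl fun j _ ↦ ?_
  rw [← intervalIntegral.integral_const_mul]
  congr 1 with s
  ring

theorem integral_pow_mul_Jpoly (N k m : ℕ) :
    ∫ s in (0 : ℝ)..1, s ^ m * Jpoly N (k + m + 1) s =
      (-1 : ℝ) ^ N * (N + k)! * m ! / (k ! * (N + m + 1)!) := by
  set x := N + k + m + 1 with hx
  have hfac_ne (n : ℕ) : (n ! : ℝ) ≠ 0 := cast_ne_zero.mpr n.factorial_ne_zero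
  have hterm (j : ℕ) :
      (-1 : ℝ) ^ j * N.choose j *
          ((ascPochhammer ℝ j).eval ((N : ℝ) + ↑(k + m + 1) + 1) / j !) *
          ((m ! * j ! : ℝ) / (m + j + 1)!) =
        m ! * (N + k)! / x ! * ((-1 : ℤ) ^ j * N.choose j * (x + j).choose (N + k) : ℤ) := by
    have hpoch : (ascPochhammer ℝ j).eval ((x : ℝ) + 1) = (x + j)! / x ! := by
      rw [eq_div_iff (hfac_ne x), mul_comm]
      exact_mod_cast factorial_mul_ascPochhammer ℝ x j
    have hchoose := cast_add_choose ℝ (a := N + k) (b := m + j + 1)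
    rw [show N + k + (m + j + 1) = x + j by omega] at hchoose
    rw [show (N : ℝ) + ↑(k + m + 1) + 1 = x + 1 by rw [hx]; push_cast; ring, hpoch]
    push_cast
    rw [hchoose]
    field_simp
  rw [integral_pow_mul_Jpoly_eq_sum, sum_congr rfl fun j _ ↦ hterm j, ← mul_sum,
    ← Int.cast_sum, sum_neg_one_pow_mul_choose_mul_choose]
  have hchoose := cast_add_choose ℝ (a := k) (b := N + m + 1)
  rw [show k + (N + m + 1) = x by omega] at hchoose
  push_cast
  rw [hchoose]
  field_simp

/-- Jacobi-polynomial moment identity (eq. (B) of Appendix B):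
`∫_0^1 s^{β−k−1}·J(s) ds = (−1)^N·(N+k)!·(β−k−1)!/(k!·(N+β−k)!)`. -/
theorem jacobi_moment (N β k : ℕ) (hβ : 1 ≤ β) (hk : k ≤ β - 1) :
    ∫ s in (0 : ℝ)..1, s ^ (β - k - 1) * Jpoly N β s =
      (-1 : ℝ) ^ N * (N + k).factorial * (β - k - 1).factorial /
        (k.factorial * (N + β - k).factorial) := by
  obtain ⟨m, rfl⟩ : ∃ m, β = k + m + 1 := ⟨β - k - 1, by omega⟩
  rw [show k + m + 1 - k - 1 = m by omega, show N + (k + m + 1) - k = N + m + 1 by omega]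
  exact integral_pow_mul_Jpoly N k m
end

section
/- Let n ≥ 1 and k be integers with 0 ≤ k ≤ n−1, and let w ∈ ℂ with |w| < 1. Then the convergent series Σ_{ℓ=0}^{∞} ((n+1)_ℓ · (k+1)_ℓ / ((k+2)_ℓ · ℓ!)) · w^ℓ equals (1−w)^{−n} · Σ_{ℓ=0}^{n−1−k} (−1)^ℓ · ((n−k−1)!/(n−k−1−ℓ)!) · w^ℓ / (k+2)_ℓ, where (q)_ℓ denotes the Pochhammer symbol (rising factorial). -/
/-!
Write `n = k + N + 1`, `α = -N`, `γ = k + 2`, `bⱼ = (α)ⱼ/(γ)ⱼ` and `Aᵢ = (γ-α-1)ᵢ/i! = (n)ᵢ/i!`.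
By the binomial series `(1 - w)⁻ⁿ = ∑ Aᵢ wⁱ`, and since `bⱼ = 0` for `j > N`, the right-hand side is
the Cauchy product of `∑ Aᵢ wⁱ` with `∑ bⱼ wʲ`, so the claim is the coefficient identity
`∑_{j ≤ m} bⱼ A_{m-j} = (γ-α)ₘ (γ-1)ₘ / ((γ)ₘ m!)` (Euler's transformation, coefficientwise).
Both sides obey the recurrence `(m+1)(γ+m) xₘ₊₁ = (γ-α+m)(γ-1+m) xₘ`: the right side by the ratio of
consecutive terms, the convolution because the difference of the two sides telescopes against the
certificate `G j = -j(γ-1+j) bⱼ A_{m+1-j}`.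
-/

open Finset

theorem HasSum.ite_le_sub {M : Type*} [AddCommMonoid M] [TopologicalSpace M] {g : ℕ → M} {t : M}
    (hg : HasSum g t) (j : ℕ) : HasSum (fun m => if j ≤ m then g (m - j) else 0) t := by
  refine (Function.Injective.hasSum_iff (add_left_injective j) fun m hm => ?_).mp ?_
  · exact if_neg fun hjm => hm ⟨m - j, Nat.sub_add_cancel hjm⟩
  · simpa [Function.comp_def] using hg

theorem HasSum.sum_range_mul_of_eq_zero {R : Type*} [Semiring R] [TopologicalSpace R]
    [IsTopologicalSemiring R] {f g : ℕ → R} {t : R} {N : ℕ} (hf : ∀ j, N < j → f j = 0)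
    (hg : HasSum g t) :
    HasSum (fun m => ∑ j ∈ range (m + 1), f j * g (m - j)) ((∑ j ∈ range (N + 1), f j) * t) := by
  set h : ℕ → ℕ → R := fun j m => if j ≤ m then f j * g (m - j) else 0
  have hsum : HasSum (fun m => ∑ j ∈ range (N + 1), h j m) ((∑ j ∈ range (N + 1), f j) * t) := by
    rw [sum_mul]
    exact hasSum_sum fun j _ => by simpa [h, mul_ite] using (hg.mul_left (f j)).ite_le_sub j
  convert hsum using 2 with m
  have hzero : ∀ j ∈ range (N + 1) ∪ range (m + 1), j ∉ range (min N m + 1) → h j m = 0 := by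
    intro j _ hj
    rw [mem_range, Nat.lt_succ_iff, le_min_iff, not_and_or, not_le, not_le] at hj
    rcases hj with hNj | hmj
    · simp [h, hf j hNj]
    · simp [h, Nat.not_le.mpr hmj]
  calc ∑ j ∈ range (m + 1), f j * g (m - j)
      = ∑ j ∈ range (m + 1), h j m :=
        sum_congr rfl fun j hj => (if_pos (Nat.lt_succ_iff.mp (mem_range.mp hj))).symm
    _ = ∑ j ∈ range (min N m + 1), h j m :=
        (sum_subset (range_subset_range.mpr (by omega)) fun j hj => hzero j (by simp_all)).symm
    _ = ∑ j ∈ range (N + 1), h j m :=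
        sum_subset (range_subset_range.mpr (by omega)) fun j hj => hzero j (by simp_all)

theorem hypergeometric_convolution_recurrence {R : Type*} [CommRing R] (α γ : R) {b A : ℕ → R}
    (hb : ∀ j : ℕ, (γ + j) * b (j + 1) = (α + j) * b j)
    (hA : ∀ i : ℕ, (i + 1) * A (i + 1) = (γ - α - 1 + i) * A i) (m : ℕ) :
    (m + 1) * (γ + m) * ∑ j ∈ range (m + 2), b j * A (m + 1 - j) =
      (γ - α + m) * (γ - 1 + m) * ∑ j ∈ range (m + 1), b j * A (m - j) := by
  set G : ℕ → R := fun j => -(j * (γ - 1 + j) * b j * A (m + 1 - j))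
  have hstep : ∀ j ∈ range (m + 1),
      (m + 1) * (γ + m) * (b j * A (m + 1 - j)) - (γ - α + m) * (γ - 1 + m) * (b j * A (m - j))
        = G (j + 1) - G j := by
    intro j hj
    obtain ⟨i, rfl⟩ : ∃ i, m = i + j := ⟨m - j, by have := mem_range.mp hj; omega⟩
    simp only [G, show i + j + 1 - j = i + 1 by omega, show i + j + 1 - (j + 1) = i by omega,
      show i + j - j = i by omega]
    push_cast
    linear_combination ((j : R) + 1) * A i * hb j + b j * (γ + i + 2 * j) * hA i
  rw [sum_range_succ, mul_add, mul_sum, mul_sum, ← sub_eq_zero, add_sub_right_comm,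
    ← sum_sub_distrib, sum_congr rfl hstep, sum_range_sub]
  simp only [G, Nat.sub_self, Nat.cast_zero, zero_mul, neg_zero, sub_zero]
  push_cast
  ring

section Field

variable {K : Type*} [Field K]

theorem ascPochhammer_eval_ne_zero {γ : K} (hγ : ∀ i : ℕ, γ + i ≠ 0) (n : ℕ) :
    (ascPochhammer K n).eval γ ≠ 0 := by
  rw [Ne, ascPochhammer_eval_eq_zero_iff]
  rintro ⟨i, -, hi⟩
  exact hγ i (by rw [hi, add_neg_cancel])

variable [CharZero K]

theorem ordinaryHypergeometricCoefficient_succ (a b c : K) (m : ℕ) (hc : c + m ≠ 0) :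
    (m + 1) * (c + m) * ordinaryHypergeometricCoefficient a b c (m + 1) =
      (a + m) * (b + m) * ordinaryHypergeometricCoefficient a b c m := by
  have hm : (m + 1 : K) ≠ 0 := Nat.cast_add_one_ne_zero m
  simp only [ordinaryHypergeometricCoefficient, ascPochhammer_succ_eval, Nat.factorial_succ,
    Nat.cast_mul, Nat.cast_succ, mul_inv]
  field_simp

theorem sum_range_ascPochhammer_mul_eq_ordinaryHypergeometricCoefficient (α γ : K)
    (hγ : ∀ i : ℕ, γ + i ≠ 0) (m : ℕ) :
    ∑ j ∈ range (m + 1), (ascPochhammer K j).eval α / (ascPochhammer K j).eval γ *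
        ((ascPochhammer K (m - j)).eval (γ - α - 1) / (m - j).factorial) =
      ordinaryHypergeometricCoefficient (γ - α) (γ - 1) γ m := by
  set b : ℕ → K := fun j => (ascPochhammer K j).eval α / (ascPochhammer K j).eval γ
  set A : ℕ → K := fun i => (ascPochhammer K i).eval (γ - α - 1) / i.factorial
  have hb (j : ℕ) : (γ + j) * b (j + 1) = (α + j) * b j := by
    have hγj := ascPochhammer_eval_ne_zero hγ j
    have hγj' := hγ j
    simp only [b, ascPochhammer_succ_eval]
    field_simp
  have hA (i : ℕ) : (i + 1) * A (i + 1) = (γ - α - 1 + i) * A i := by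
    have hi := Nat.cast_add_one_ne_zero (R := K) i
    simp only [A, ascPochhammer_succ_eval, Nat.factorial_succ, Nat.cast_mul, Nat.cast_succ]
    field_simp
  induction m with
  | zero => simp [ordinaryHypergeometricCoefficient]
  | succ m ih =>
    refine mul_left_cancel₀ (mul_ne_zero (Nat.cast_add_one_ne_zero m) (hγ m)) ?_
    calc ((m : K) + 1) * (γ + m) * ∑ j ∈ range (m + 1 + 1), b j * A (m + 1 - j)
        = (γ - α + m) * (γ - 1 + m) * ∑ j ∈ range (m + 1), b j * A (m - j) :=
          hypergeometric_convolution_recurrence α γ hb hA m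
      _ = _ := by rw [ih, ordinaryHypergeometricCoefficient_succ _ _ _ m (hγ m)]

theorem ascPochhammer_eval_neg_natCast_of_le {N j : ℕ} (hj : j ≤ N) :
    (ascPochhammer K j).eval (-(N : K)) = (-1) ^ j * (N.factorial / (N - j).factorial) := by
  rw [ascPochhammer_eval_neg_eq_descPochhammer, descPochhammer_eval_eq_descFactorial,
    ← Nat.factorial_mul_descFactorial hj, Nat.cast_mul,
    mul_div_cancel_left₀ _ (Nat.cast_ne_zero.mpr (Nat.factorial_ne_zero _))]

end Field

section Series

variable {𝕜 : Type*} [NormedField 𝕜] [CharZero 𝕜] {w : 𝕜}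

theorem hasSum_ascPochhammer_div_factorial_mul_pow (n : ℕ) (hw : ‖w‖ < 1) :
    HasSum (fun i => (ascPochhammer 𝕜 i).eval ((n + 1 : ℕ) : 𝕜) / i.factorial * w ^ i)
      ((1 - w) ^ (n + 1))⁻¹ := by
  convert hasSum_choose_mul_geometric_of_norm_lt_one n hw using 2 with i
  · rw [← Nat.cast_ascFactorial, Nat.ascFactorial_eq_factorial_mul_choose, add_comm n,
      Nat.choose_symm_add, Nat.cast_mul,
      mul_div_cancel_left₀ _ (Nat.cast_ne_zero.mpr (Nat.factorial_ne_zero i))]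
  · rw [one_div]

theorem hasSum_ordinaryHypergeometricCoefficient_mul_pow_euler (k N : ℕ) (hw : ‖w‖ < 1) :
    HasSum
      (fun m => ordinaryHypergeometricCoefficient ((k : 𝕜) + 2 + N) ((k : 𝕜) + 1) ((k : 𝕜) + 2) m
        * w ^ m)
      (((1 - w) ^ (k + N + 1))⁻¹ * ∑ j ∈ range (N + 1),
        ordinaryHypergeometricCoefficient (-(N : 𝕜)) 1 ((k : 𝕜) + 2) j * w ^ j) := by
  set α : 𝕜 := -N
  set γ : 𝕜 := k + 2
  have hγ (i : ℕ) : γ + i ≠ 0 := by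
    simpa [γ] using (Nat.cast_ne_zero (R := 𝕜)).mpr (show k + 2 + i ≠ 0 by omega)
  have hbinom := hasSum_ascPochhammer_div_factorial_mul_pow (k + N) hw
  rw [show ((k + N + 1 : ℕ) : 𝕜) = γ - α - 1 by simp only [α, γ]; push_cast; ring] at hbinom
  have hvanish (j : ℕ) (hj : N < j) :
      (ascPochhammer 𝕜 j).eval α / (ascPochhammer 𝕜 j).eval γ * w ^ j = 0 := by
    rw [ascPochhammer_eval_neg_coe_nat_of_lt hj, zero_div, zero_mul]
  rw [show (k : 𝕜) + 2 + N = γ - α by simp only [α, γ]; ring,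
    show (k : 𝕜) + 1 = γ - 1 by simp only [γ]; ring, mul_comm]
  convert hbinom.sum_range_mul_of_eq_zero hvanish using 1
  · funext m
    rw [← sum_range_ascPochhammer_mul_eq_ordinaryHypergeometricCoefficient α γ hγ, sum_mul]
    refine sum_congr rfl fun j hj => ?_
    rw [← pow_mul_pow_sub w (Nat.lt_succ_iff.mp (mem_range.mp hj))]
    ring
  · congr 1
    refine sum_congr rfl fun j _ => ?_
    have hj := Nat.cast_ne_zero (R := 𝕜).mpr (Nat.factorial_ne_zero j)
    simp only [ordinaryHypergeometricCoefficient, ascPochhammer_eval_one]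
    field_simp

end Series

/-- Simplification (eq_hyposimp) of the Gauss hypergeometric series
`₂F₁(n+1, k+1; k+2; w)`: for `0 ≤ k ≤ n−1` and `|w| < 1`, the series
`Σ_ℓ ((n+1)_ℓ(k+1)_ℓ/((k+2)_ℓ ℓ!))·w^ℓ` converges to
`(1−w)^{−n}·Σ_{ℓ=0}^{n−1−k} (−1)^ℓ·((n−k−1)!/(n−k−1−ℓ)!)·w^ℓ/(k+2)_ℓ`. -/
theorem gauss_hypergeometric_simplification (n k : ℕ) (hn : 1 ≤ n) (hk : k ≤ n - 1)
    (w : ℂ) (hw : ‖w‖ < 1) :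
    HasSum
      (fun ℓ : ℕ =>
        (ascPochhammer ℂ ℓ).eval ((n : ℂ) + 1) * (ascPochhammer ℂ ℓ).eval ((k : ℂ) + 1) /
            ((ascPochhammer ℂ ℓ).eval ((k : ℂ) + 2) * ℓ.factorial) * w ^ ℓ)
      (((1 - w) ^ n)⁻¹ *
        ∑ ℓ ∈ Finset.range (n - k),
          (-1 : ℂ) ^ ℓ * ((n - k - 1).factorial / ((n - k - 1 - ℓ).factorial : ℂ)) * w ^ ℓ /
            (ascPochhammer ℂ ℓ).eval ((k : ℂ) + 2)) := by
  obtain ⟨N, rfl⟩ : ∃ N, n = k + N + 1 := ⟨n - k - 1, by omega⟩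
  convert! hasSum_ordinaryHypergeometricCoefficient_mul_pow_euler k N hw using 1
  · funext ℓ
    rw [show ((k + N + 1 : ℕ) : ℂ) + 1 = k + 2 + N by push_cast; ring]
    ring
  · rw [show k + N + 1 - k = N + 1 by omega, Nat.add_sub_cancel]
    congr 1
    refine sum_congr rfl fun ℓ hℓ => ?_
    have hℓN : ℓ ≤ N := Nat.lt_succ_iff.mp (mem_range.mp hℓ)
    have hℓ! := Nat.cast_ne_zero (R := ℂ).mpr (Nat.factorial_ne_zero ℓ)
    rw [ordinaryHypergeometricCoefficient, ascPochhammer_eval_one,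
      ascPochhammer_eval_neg_natCast_of_le hℓN]
    field_simp
end
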